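/- Fix a dyadic grid D on ℝ^n, a cube J∈D, and an m-linear Haar multiplier P^{α⃗}_ε with respect to D such that α_j≠1⃗ for some j∈{2,…,m}. Define f_j:=|J|^{1/2}h_J^{α_j} if α_j≠1⃗ and f_j:=χ_J if α_j=1⃗, for j=1,…,m. Then for every locally integrable b, [b,P^{α⃗}_ε]_1(f_1,…,f_m) = ε_J(b−⟨b⟩_J)|J|^{1/2}h_J^{α_{m+1}}, and hence |[b,P^{α⃗}_ε]_1(f_1,…,f_m)(x)| = |ε_J|·|b(x)−⟨b⟩_J|·χ_J(x) for a.e. x. -/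

import Mathlib

open MeasureTheory
open scoped ENNReal BigOperators

noncomputable section

/-- Real-valued functions on `ℝⁿ`, modeled as `Fin n → ℝ`. -/
abbrev Fn (n : ℕ) := (Fin n → ℝ) → ℝ

/-- An axis-parallel half-open cube in `ℝⁿ`. -/
structure Cube (n : ℕ) where
  corner : Fin n → ℝ
  side : ℝ
  side_pos : 0 < side

namespace Cube

/-- The set of points of a cube. -/
def toSet {n : ℕ} (Q : Cube n) : Set (Fin n → ℝ) :=
  {x | ∀ i, Q.corner i ≤ x i ∧ x i < Q.corner i + Q.side}

/-- The concentric triple `3Q` of a cube `Q`. -/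
def triple {n : ℕ} (Q : Cube n) : Cube n :=
  ⟨fun i => Q.corner i - Q.side, 3 * Q.side, by have := Q.side_pos; linarith⟩

/-- One-dimensional Haar factor on `[a, a+s)`; `one = true` gives the
noncancellative factor (indicator), `one = false` the cancellative one. -/
def haar1 (a s : ℝ) (one : Bool) (t : ℝ) : ℝ :=
  if one then (if a ≤ t ∧ t < a + s then 1 else 0)
  else (if a ≤ t ∧ t < a + s / 2 then 1 else 0) - (if a + s / 2 ≤ t ∧ t < a + s then 1 else 0)

/-- The Haar function `h_Q^α`, where `α i = true` encodes `α_i = 1` (noncancellative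
in direction `i`). It has modulus `|Q|^{-1/2}` on `Q`. -/
def haar {n : ℕ} (Q : Cube n) (α : Fin n → Bool) : Fn n :=
  fun x => (Real.sqrt (Q.side ^ n))⁻¹ * ∏ i, haar1 (Q.corner i) Q.side (α i) (x i)

end Cube

/-- Average of `f` over the cube `Q` (w.r.t. Lebesgue measure). -/
def cubeAvg {n : ℕ} (Q : Cube n) (f : Fn n) : ℝ := ⨍ x in Q.toSet, f x

/-- Hölder conjugate exponent `p' = p/(p-1)`. -/
def hconj (p : ℝ) : ℝ := p / (p - 1)

/-- The total exponent `p` with `1/p = ∑ j 1/p_j`. -/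
def pTot {ι : Type*} [Fintype ι] (p : ι → ℝ) : ℝ := (∑ j, (p j)⁻¹)⁻¹

/-! ### Muckenhoupt weights -/

/-- The `A_p` quantity of a weight on a fixed cube. -/
def apQ {n : ℕ} (p : ℝ) (w : Fn n) (Q : Cube n) : ℝ :=
  cubeAvg Q w * (cubeAvg Q fun x => w x ^ (1 - hconj p)) ^ (p - 1)

/-- The `A_p` characteristic `[w]_{A_p}`. -/
def apConst {n : ℕ} (p : ℝ) (w : Fn n) : ℝ := ⨆ Q : Cube n, apQ p w Q

/-- `w` is a Muckenhoupt `A_p` weight. -/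
def IsAp {n : ℕ} (p : ℝ) (w : Fn n) : Prop :=
  (∀ x, 0 < w x) ∧ LocallyIntegrable w volume ∧ BddAbove (Set.range (apQ p w))

/-- The weight `ν_{w⃗} = ∏ j w_j^{p/p_j}` associated to a weight vector. -/
def nuW {n : ℕ} {ι : Type*} [Fintype ι] (p : ι → ℝ) (w : ι → Fn n) : Fn n :=
  fun x => ∏ j, w j x ^ (pTot p / p j)

/-- The multilinear `A_{p⃗}` quantity on a fixed cube (this is `[w⃗]_{A_{p⃗}}^{1/p}`
localized to `Q`). -/
def multiApQ {n : ℕ} {ι : Type*} [Fintype ι] (p : ι → ℝ) (w : ι → Fn n) (Q : Cube n) : ℝ :=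
  (cubeAvg Q (nuW p w)) ^ (1 / pTot p) *
    ∏ j, (cubeAvg Q fun x => w j x ^ (1 - hconj (p j))) ^ (1 / hconj (p j))

/-- The multilinear characteristic `[w⃗]_{A_{p⃗}}`. -/
def multiApConst {n : ℕ} {ι : Type*} [Fintype ι] (p : ι → ℝ) (w : ι → Fn n) : ℝ :=
  (⨆ Q : Cube n, multiApQ p w Q) ^ pTot p

/-- `w⃗` is a multilinear `A_{p⃗}` weight. -/
def IsMultiAp {n : ℕ} {ι : Type*} [Fintype ι] (p : ι → ℝ) (w : ι → Fn n) : Prop :=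
  (∀ j x, 0 < w j x) ∧ BddAbove (Set.range (multiApQ p w))

/-! ### BMO spaces -/

/-- The BMO quantity of `b` on a cube. -/
def bmoQ {n : ℕ} (b : Fn n) (Q : Cube n) : ℝ := cubeAvg Q fun x => |b x - cubeAvg Q b|

/-- The BMO norm `‖b‖_{BMO(ℝⁿ)}`. -/
def bmoNorm {n : ℕ} (b : Fn n) : ℝ := ⨆ Q : Cube n, bmoQ b Q

/-- `b ∈ BMO(ℝⁿ)`. -/
def MemBMO {n : ℕ} (b : Fn n) : Prop :=
  LocallyIntegrable b volume ∧ BddAbove (Set.range (bmoQ b))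

/-- The weighted BMO quantity of `b` on a cube. -/
def bmoNuQ {n : ℕ} (ν b : Fn n) (Q : Cube n) : ℝ :=
  (∫ x in Q.toSet, |b x - cubeAvg Q b|) / (∫ x in Q.toSet, ν x)

/-- The Bloom weighted BMO norm `‖b‖_{BMO(ν)}`. -/
def bmoNuNorm {n : ℕ} (ν b : Fn n) : ℝ := ⨆ Q : Cube n, bmoNuQ ν b Q

/-- `b ∈ BMO(ν)`. -/
def MemBMOnu {n : ℕ} (ν b : Fn n) : Prop :=
  LocallyIntegrable b volume ∧ BddAbove (Set.range (bmoNuQ ν b))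

/-! ### Weighted Lebesgue norms -/

/-- The weighted norm `‖f‖_{L^p(w)} = (∫ |f|^p w)^{1/p}` valued in `ℝ≥0∞`. -/
def wnorm {n : ℕ} (p : ℝ) (w : Fn n) (f : Fn n) : ℝ≥0∞ :=
  (∫⁻ x, ENNReal.ofReal (|f x| ^ p * w x)) ^ (1 / p)

/-- The weighted norm of an `ℝ≥0∞`-valued function. -/
def wnormE {n : ℕ} (p : ℝ) (w : Fn n) (F : (Fin n → ℝ) → ℝ≥0∞) : ℝ≥0∞ :=
  (∫⁻ x, F x ^ p * ENNReal.ofReal (w x)) ^ (1 / p)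

/-! ### Multilinear operators and commutators -/

/-- An `m`-linear operator on functions on `ℝⁿ` (as a raw map on `m`-tuples). -/
abbrev MOp (n m : ℕ) := (Fin m → Fn n) → Fn n

/-- `T` is `m`-linear in each entry. -/
def IsMLinear {n m : ℕ} (T : MOp n m) : Prop :=
  ∀ (j : Fin m) (f : Fin m → Fn n) (g : Fn n) (c : ℝ),
    T (Function.update f j fun x => c * f j x + g x) =
      fun x => c * T f x + T (Function.update f j g) x

/-- The mcommutator `[b, T]_β`. -/
def mcommutator {n m : ℕ} (b : Fn n) (β : Fin m) (T : MOp n m) : MOp n m :=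
  fun f x => b x * T f x - T (Function.update f β fun y => b y * f β y) x

/-- The iterated mcommutator `[b_0, [b_1, ⋯ [b_{ℓ-1}, T]_{ι(ℓ-1)} ⋯ ]_{ι 1}]_{ι 0}`. -/
def iterComm {n m : ℕ} : ∀ {ℓ : ℕ}, (Fin ℓ → Fin m) → (Fin ℓ → Fn n) → MOp n m → MOp n m
  | 0, _, _, T => T
  | (_ + 1), ι, b, T =>
      mcommutator (b 0) (ι 0) (iterComm (fun s => ι s.succ) (fun s => b s.succ) T)

/-- Iterated mcommutator in a fixed entry `β` with `k` symbols. -/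
def iterCommAt {n m : ℕ} (β : Fin m) : ∀ {k : ℕ}, (Fin k → Fn n) → MOp n m → MOp n m
  | 0, _, T => T
  | (k + 1), b, T =>
      mcommutator (b (Fin.last k)) β (iterCommAt β (fun i : Fin k => b i.castSucc) T)

/-- The higher order multilinear mcommutator `C^{k⃗,m}_{{b⃗}}(T)`. -/
def higherComm {n m : ℕ} (k : Fin m → ℕ) (b : (j : Fin m) → Fin (k j) → Fn n)
    (T : MOp n m) : MOp n m :=
  (List.finRange m).foldr (fun j T' => iterCommAt j (b j) T') T

/-! ### Calderón–Zygmund operators -/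

/-- Standard estimates for an `m`-linear CZ kernel (with constants `C`, `ε`):
size decay `|K| ≤ C (∑ |y_k - y_ℓ|)^{-nm}` and Hölder smoothness of order `ε`
in each variable. -/
structure IsCZK (n m : ℕ) (K : (Fin (m + 1) → Fin n → ℝ) → ℝ) (C ε : ℝ) : Prop where
  size : ∀ y : Fin (m + 1) → Fin n → ℝ, (∃ k l, y k ≠ y l) →
    |K y| ≤ C / (∑ k, ∑ l, dist (y k) (y l)) ^ (n * m)
  smooth : ∀ (j : Fin (m + 1)) (y : Fin (m + 1) → Fin n → ℝ) (y' : Fin n → ℝ),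
    dist (y j) y' ≤ (1 / 2) * ⨆ k, dist (y j) (y k) →
    |K y - K (Function.update y j y')| ≤
      C * dist (y j) y' ^ ε / (∑ k, ∑ l, dist (y k) (y l)) ^ ((n * m : ℝ) + ε)

/-- Bounded measurable compactly supported function. -/
def IsBCS {n : ℕ} (f : Fn n) : Prop :=
  Measurable f ∧ HasCompactSupport f ∧ ∃ M, ∀ x, |f x| ≤ M

/-- `T` is an `m`-linear Calderón–Zygmund operator: it is `m`-linear, bounded on some
tuple of (unweighted) Lebesgue spaces, and is represented off the diagonal by a kernel
satisfying the standard estimates. -/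
structure IsCZO (n m : ℕ) (T : MOp n m) : Prop where
  mlinear : IsMLinear T
  bounded : ∃ q : Fin m → ℝ, (∀ j, 1 < q j) ∧ ∃ A : ℝ, 0 ≤ A ∧
    ∀ f : Fin m → Fn n,
      wnorm (pTot q) (fun _ => (1 : ℝ)) (T f) ≤
        ENNReal.ofReal A * ∏ j, wnorm (q j) (fun _ => (1 : ℝ)) (f j)
  kernel : ∃ (K : (Fin (m + 1) → Fin n → ℝ) → ℝ) (C ε : ℝ), 0 < C ∧ 0 < ε ∧
    IsCZK n m K C ε ∧
    ∀ f : Fin m → Fn n, (∀ j, IsBCS (f j)) →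
      ∀ x ∉ ⋂ j, tsupport (f j),
        T f x = ∫ y : Fin m → Fin n → ℝ, K (Fin.cons x y) * ∏ j, f j (y j)

/-! ### Dyadic grids and dyadic model operators -/

/-- An abstract dyadic grid on `ℝⁿ`: a nested family of cubes of dyadic side lengths
partitioning `ℝⁿ` at every scale. -/
structure DyadicGrid (n : ℕ) where
  cubes : Set (Cube n)
  side_mem : ∀ Q ∈ cubes, ∃ k : ℤ, Q.side = (2 : ℝ) ^ k
  covers : ∀ (k : ℤ) (x : Fin n → ℝ), ∃ Q ∈ cubes, Q.side = (2 : ℝ) ^ k ∧ x ∈ Q.toSet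
  nested : ∀ Q ∈ cubes, ∀ R ∈ cubes,
    Q.toSet ⊆ R.toSet ∨ R.toSet ⊆ Q.toSet ∨ Disjoint Q.toSet R.toSet

/-- The all-ones vector `1⃗ ∈ {0,1}ⁿ` (encoded with `true` for `1`). -/
def oneVec (n : ℕ) : Fin n → Bool := fun _ => true

/-- Admissibility for the Haar multiplier signature: at least two of the `m+1` Haar
functions are cancellative. -/
def IsHaarAdmissible {n m : ℕ} (α : Fin (m + 1) → Fin n → Bool) : Prop :=
  ∃ k k' : Fin (m + 1), k ≠ k' ∧ α k ≠ oneVec n ∧ α k' ≠ oneVec n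

/-- Admissibility for the paraproduct signature: `α_1 ≠ 1⃗` and at least one of the
remaining Haar functions is cancellative. -/
def IsParaAdmissible {n m : ℕ} (α : Fin (m + 2) → Fin n → Bool) : Prop :=
  α 0 ≠ oneVec n ∧ ∃ k : Fin (m + 2), k ≠ 0 ∧ α k ≠ oneVec n

/-- The `m`-linear Haar multiplier restricted to a collection `S` of cubes. -/
def haarMultOn {n m : ℕ} (S : Set (Cube n)) (ε : Cube n → ℝ)
    (α : Fin (m + 1) → Fin n → Bool) : MOp n m :=
  fun f x => ∑' Q : S,
    ε Q.1 * (∏ j : Fin m, ∫ y, f j y * Q.1.haar (α j.castSucc) y) *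
      Q.1.haar (α (Fin.last m)) x * ((Q.1.side ^ n) ^ (-((m : ℝ) - 1) / 2))

/-- The `m`-linear Haar multiplier `P^{α⃗}_ε` with respect to the dyadic grid `D`. -/
def haarMult {n m : ℕ} (D : DyadicGrid n) (ε : Cube n → ℝ)
    (α : Fin (m + 1) → Fin n → Bool) : MOp n m :=
  haarMultOn D.cubes ε α

/-- The `m`-linear dyadic paraproduct restricted to a collection `S` of cubes. -/
def paraProdOn {n m : ℕ} (S : Set (Cube n)) (ε : Cube n → ℝ) (g : Fn n)
    (α : Fin (m + 2) → Fin n → Bool) : MOp n m :=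
  fun f x => ∑' Q : S,
    ε Q.1 * (∫ y, g y * Q.1.haar (α 0) y) *
      (∏ j : Fin m, ∫ y, f j y * Q.1.haar (α j.succ.castSucc) y) *
      Q.1.haar (α (Fin.last (m + 1))) x * ((Q.1.side ^ n) ^ (-(m : ℝ) / 2))

/-- The `m`-linear dyadic paraproduct `π^{α⃗}_{g,ε}` with respect to `D`. -/
def paraProd {n m : ℕ} (D : DyadicGrid n) (ε : Cube n → ℝ) (g : Fn n)
    (α : Fin (m + 2) → Fin n → Bool) : MOp n m :=
  paraProdOn D.cubes ε g α

/-- Dyadic BMO quantity over a grid. -/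
def MemBMOD {n : ℕ} (D : DyadicGrid n) (b : Fn n) : Prop :=
  LocallyIntegrable b volume ∧ BddAbove (Set.range fun Q : D.cubes => bmoQ b Q.1)

/-- `T` is a dyadic model operator with respect to the grid `D`: a Haar multiplier or
a dyadic paraproduct with bounded coefficients. -/
def IsDyadicModelOp {n m : ℕ} (D : DyadicGrid n) (T : MOp n m) : Prop :=
  (∃ (ε : Cube n → ℝ) (α : Fin (m + 1) → Fin n → Bool),
      (∃ B, ∀ Q ∈ D.cubes, |ε Q| ≤ B) ∧ IsHaarAdmissible α ∧ T = haarMult D ε α) ∨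
  (∃ (ε : Cube n → ℝ) (g : Fn n) (α : Fin (m + 2) → Fin n → Bool),
      (∃ B, ∀ Q ∈ D.cubes, |ε Q| ≤ B) ∧ MemBMOD D g ∧ IsParaAdmissible α ∧
        T = paraProd D ε g α)

/-! ### Sparse collections and sparse operators -/

/-- A collection of cubes is `η`-sparse. -/
def IsSparse {n : ℕ} (η : ℝ) (S : Set (Cube n)) : Prop :=
  ∃ E : Cube n → Set (Fin n → ℝ),
    (∀ Q ∈ S, E Q ⊆ Q.toSet ∧ ENNReal.ofReal η * volume Q.toSet < volume (E Q)) ∧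
    S.PairwiseDisjoint E

/-- The factor `Γ(b, f, Q, γ)` of the sparse operators adapted to a mcommutator:
`γ = 0` gives `|b - ⟨b⟩_Q| ⟨|f|⟩_Q`, `γ = 1` gives `⟨|(b - ⟨b⟩_Q) f|⟩_Q`. -/
def GammaF {n : ℕ} (b f : Fn n) (Q : Cube n) (γ : Fin 2) (x : Fin n → ℝ) : ℝ≥0∞ :=
  if γ = 0 then ENNReal.ofReal (|b x - cubeAvg Q b| * cubeAvg Q fun y => |f y|)
  else ENNReal.ofReal (cubeAvg Q fun y => |(b y - cubeAvg Q b) * f y|)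

/-- The sparse operator `A^{γ⃗}_{S,b⃗}(f⃗)` adapted to the symbols `b⃗` (indexed along
the injection `ι : Fin ℓ → Fin m` describing the subset `I ⊆ {1,…,m}`). -/
def sparseOp {n m ℓ : ℕ} (S : Set (Cube n)) (ι : Fin ℓ → Fin m) (b : Fin ℓ → Fn n)
    (γ : Fin ℓ → Fin 2) (f : Fin m → Fn n) (x : Fin n → ℝ) : ℝ≥0∞ :=
  ∑' Q : S, Set.indicator Q.1.toSet
    (fun x' => (∏ s, GammaF (b s) (f (ι s)) Q.1 (γ s) x') *
      ∏ j ∈ Finset.univ.filter (fun j : Fin m => ∀ s, ι s ≠ j),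
        ENNReal.ofReal (cubeAvg Q.1 fun y => |f j y|)) x

/-- The classical linear sparse operator `A¹_S f = ∑_{Q ∈ S} ⟨|f|⟩_Q χ_Q`. -/
def linSparseOp {n : ℕ} (S : Set (Cube n)) (f : Fn n) (x : Fin n → ℝ) : ℝ≥0∞ :=
  ∑' Q : S, Set.indicator Q.1.toSet
    (fun _ => ENNReal.ofReal (cubeAvg Q.1 fun y => |f y|)) x

/-- The classical `m`-linear sparse operator (no symbols). -/
def mSparseOp {n m : ℕ} (S : Set (Cube n)) (f : Fin m → Fn n) (x : Fin n → ℝ) : ℝ≥0∞ :=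
  ∑' Q : S, Set.indicator Q.1.toSet
    (fun _ => ∏ j, ENNReal.ofReal (cubeAvg Q.1 fun y => |f j y|)) x

/-! ### Shifted dyadic grids -/

/-- A cube of the `t`-shifted dyadic grid, `t ∈ {0,1,2}ⁿ`. -/
def shiftedDyadicCube (n : ℕ) (t : Fin n → Fin 3) (k : ℤ) (mm : Fin n → ℤ) : Cube n where
  corner := fun i => (2 : ℝ) ^ k * ((mm i : ℝ) + (-1 : ℝ) ^ k * ((t i : ℕ) : ℝ) / 3)
  side := (2 : ℝ) ^ k
  side_pos := by positivity

/-- One of the `3ⁿ` shifted dyadic grids on `ℝⁿ`. -/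
def shiftedDyadicGrid (n : ℕ) (t : Fin n → Fin 3) : Set (Cube n) :=
  {Q | ∃ k mm, Q = shiftedDyadicCube n t k mm}

/-- The dyadic subcubes `D(Q₀)` of a cube `Q₀`. -/
def dyadicSubcubes {n : ℕ} (Q0 : Cube n) : Set (Cube n) :=
  {Q | ∃ (k : ℕ) (mm : Fin n → ℕ), (∀ i, mm i < 2 ^ k) ∧
    Q.side = Q0.side / 2 ^ k ∧ ∀ i, Q.corner i = Q0.corner i + mm i * (Q0.side / 2 ^ k)}

/-! ### Auxiliary constants for Bloom bounds -/

/-- The index set `{1,…,m} ∖ I` for an injection `ι : Fin ℓ → Fin m`. -/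
abbrev outIdx {m ℓ : ℕ} (ι : Fin ℓ → Fin m) : Type := {j : Fin m // ∀ s, ι s ≠ j}

/-- `max(q, p₁',…,p_m')`. -/
def sharpMax {m : ℕ} (q : ℝ) (p : Fin m → ℝ) : ℝ := max q (⨆ j, hconj (p j))

/-- The quantitative two-weight constant `C(μ⃗, λ⃗, p⃗)` from the Bloom bounds. -/
def bloomConst {n m ℓ : ℕ} (p : Fin m → ℝ) (ι : Fin ℓ → Fin m)
    (μ lam : Fin m → Fn n) : ℝ :=
  (∏ s : Fin ℓ,
      apConst (p (ι s)) (μ (ι s)) ^ max 1 (1 / (p (ι s) - 1)) *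
        apConst (p (ι s)) (lam (ι s)) ^
          ((1 / p (ι s)) *
            max (p (ι s)) (sharpMax (pTot fun j : outIdx ι => p j.1) p))) *
    multiApConst (fun j : outIdx ι => p j.1) (fun j => μ j.1) ^
      ((1 / pTot fun j : outIdx ι => p j.1) *
        sharpMax (pTot fun j : outIdx ι => p j.1) p)

/-! ### Maximal operators -/

/-- Hardy–Littlewood maximal function (over cubes), valued in `ℝ≥0∞`. -/
def maxFn {n : ℕ} (f : Fn n) (x : Fin n → ℝ) : ℝ≥0∞ :=
  ⨆ (Q : Cube n) (_ : x ∈ Q.toSet), ENNReal.ofReal (cubeAvg Q fun y => |f y|)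

/-- The cubes of `D` strictly containing `J`. -/
def truncCubes {n : ℕ} (D : DyadicGrid n) (J : Cube n) : Set (Cube n) :=
  {Q | Q ∈ D.cubes ∧ J.toSet ⊂ Q.toSet}

/-- The maximal truncated operator `T_♯` of a family of truncations
`S ↦ TOn S` of a dyadic model operator. -/
def maxTrunc {n m : ℕ} (D : DyadicGrid n) (TOn : Set (Cube n) → MOp n m)
    (f : Fin m → Fn n) (x : Fin n → ℝ) : ℝ≥0∞ :=
  ⨆ J : D.cubes, ENNReal.ofReal |TOn (truncCubes D J.1) f x|

end


/-! Only the cube `J` survives in the Haar sum. For every other grid cube `Q`, the test function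
in the cancellative slot `j₀ ≠ 1` is orthogonal to `h_Q^{α_{j₀}}`: if `J ⊊ Q` then `J` lies in a
dyadic child of `Q`, on which `h_Q^{α_{j₀}}` is constant while `h_J^{α_{j₀}}` has mean zero, and
symmetrically if `Q ⊊ J`. Since `|J|^{1/2} h_J^{1⃗} = χ_J`, every test function is
`|J|^{1/2} h_J^{α_j}`, and `(h_J^β)² = |J|⁻¹ χ_J` turns the pairing of the first slot against
`h_J^{α_1}` into `|J|^{1/2}`, resp. `|J|^{1/2} ⟨b⟩_J` once that slot is multiplied by `b`. -/

open Set

namespace Cube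

section HaarFactor

variable {a s : ℝ}

lemma abs_haar1 (hs : 0 < s) (one : Bool) (t : ℝ) :
    |haar1 a s one t| = (Ico a (a + s)).indicator (fun _ => (1 : ℝ)) t := by
  simp only [haar1, indicator, mem_Ico]
  cases one <;> simp only [Bool.false_eq_true, if_true, if_false] <;> split_ifs <;>
    norm_num <;> grind

lemma haar1_of_mem_left {t : ℝ} (hs : 0 < s) (one : Bool) (ht : t ∈ Ico a (a + s / 2)) :
    haar1 a s one t = 1 := by
  obtain ⟨h₁, h₂⟩ := ht
  cases one <;> simp [haar1, h₁, h₂, show t < a + s by linarith, show ¬ a + s / 2 ≤ t by linarith]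

lemma haar1_of_mem_right {t : ℝ} (one : Bool) (ht : t ∈ Ico (a + s / 2) (a + s)) :
    haar1 a s one t = if one then 1 else -1 := by
  obtain ⟨h₁, h₂⟩ := ht
  cases one <;> simp [haar1, h₁, h₂, show a ≤ t by linarith, show ¬ t < a + s / 2 by linarith]

lemma integral_haar1_false (a s : ℝ) : ∫ t, haar1 a s false t = 0 := by
  have hind : ∀ c d : ℝ, ∀ t, (if c ≤ t ∧ t < d then (1 : ℝ) else 0) = (Ico c d).indicator 1 t :=
    fun c d t => by simp [indicator, mem_Ico]
  have hint : ∀ c d : ℝ, Integrable ((Ico c d).indicator (1 : ℝ → ℝ)) :=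
    fun c d => (integrable_indicator_iff measurableSet_Ico).2
      (integrableOn_const measure_Ico_lt_top.ne)
  simp only [haar1, Bool.false_eq_true, if_false, hind]
  rw [integral_sub (hint _ _) (hint _ _), integral_indicator_one measurableSet_Ico,
    integral_indicator_one measurableSet_Ico]
  simp [measureReal_def, Real.volume_Ico]
  ring_nf

end HaarFactor


variable {n : ℕ}

lemma toSet_eq_pi (Q : Cube n) :
    Q.toSet = univ.pi fun i => Ico (Q.corner i) (Q.corner i + Q.side) := by
  ext x
  simp [toSet, mem_pi, mem_Ico]

lemma measurableSet_toSet (Q : Cube n) : MeasurableSet Q.toSet := by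
  rw [toSet_eq_pi]
  exact .univ_pi fun _ => measurableSet_Ico

lemma volume_toSet (Q : Cube n) : volume Q.toSet = ENNReal.ofReal (Q.side ^ n) := by
  simp [toSet_eq_pi, volume_pi_pi, Real.volume_Ico, ENNReal.ofReal_pow Q.side_pos.le]

lemma corner_mem (Q : Cube n) : Q.corner ∈ Q.toSet :=
  fun _ => ⟨le_rfl, by linarith [Q.side_pos]⟩

lemma corner_le_of_subset {Q R : Cube n} (h : Q.toSet ⊆ R.toSet) (i : Fin n) :
    R.corner i ≤ Q.corner i :=
  (h Q.corner_mem i).1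

lemma add_side_le_of_subset {Q R : Cube n} (h : Q.toSet ⊆ R.toSet) (i : Fin n) :
    Q.corner i + Q.side ≤ R.corner i + R.side := by
  by_contra! hlt
  set y := Function.update Q.corner i (max (Q.corner i) (R.corner i + R.side))
  have hy : y ∈ Q.toSet := by
    intro k
    rcases eq_or_ne k i with rfl | hk
    · simp only [y, Function.update_self]
      exact ⟨le_max_left _ _, max_lt (by linarith [Q.side_pos]) hlt⟩
    · simpa only [y, Function.update_of_ne hk] using Q.corner_mem k
  have := (h hy i).2
  simp only [y, Function.update_self] at this
  linarith [le_max_right (Q.corner i) (R.corner i + R.side)]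

lemma side_le_of_subset {Q R : Cube n} (hn : 0 < n) (h : Q.toSet ⊆ R.toSet) :
    Q.side ≤ R.side := by
  linarith [corner_le_of_subset h ⟨0, hn⟩, add_side_le_of_subset h ⟨0, hn⟩]

lemma eq_of_subset_of_side_le {Q R : Cube n} (hn : 0 < n) (h : Q.toSet ⊆ R.toSet)
    (hs : R.side ≤ Q.side) : Q = R := by
  have hside : Q.side = R.side := le_antisymm (side_le_of_subset hn h) hs
  have hcorner : Q.corner = R.corner := funext fun i => by
    linarith [corner_le_of_subset h i, add_side_le_of_subset h i]
  cases Q; cases R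
  simp_all

lemma toSet_injective (hn : 0 < n) : Function.Injective (toSet : Cube n → Set (Fin n → ℝ)) :=
  fun _ _ h => eq_of_subset_of_side_le hn h.le (side_le_of_subset hn h.ge)

lemma indicator_toSet_eq_prod (Q : Cube n) (x : Fin n → ℝ) :
    Q.toSet.indicator (fun _ => (1 : ℝ)) x =
      ∏ i, (Ico (Q.corner i) (Q.corner i + Q.side)).indicator (fun _ => (1 : ℝ)) (x i) := by
  by_cases hx : x ∈ Q.toSet
  · rw [indicator_of_mem hx]
    exact (Finset.prod_eq_one fun i _ => indicator_of_mem (show x i ∈ Ico _ _ from hx i) _).symm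
  · obtain ⟨i, hi⟩ := not_forall.mp hx
    rw [indicator_of_notMem hx, Finset.prod_eq_zero (Finset.mem_univ i)]
    exact indicator_of_notMem (show x i ∉ Ico _ _ from hi) _

lemma abs_haar (Q : Cube n) (β : Fin n → Bool) (x : Fin n → ℝ) :
    |Q.haar β x| = (√(Q.side ^ n))⁻¹ * Q.toSet.indicator (fun _ => (1 : ℝ)) x := by
  rw [haar, abs_mul, abs_inv, abs_of_nonneg (Real.sqrt_nonneg _), Finset.abs_prod]
  simp only [abs_haar1 Q.side_pos, indicator_toSet_eq_prod]

lemma haar_eq_zero_of_notMem (Q : Cube n) (β : Fin n → Bool) {x : Fin n → ℝ}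
    (hx : x ∉ Q.toSet) : Q.haar β x = 0 := by
  simpa [indicator_of_notMem hx] using Q.abs_haar β x

lemma sqrt_mul_haar_oneVec (Q : Cube n) (x : Fin n → ℝ) :
    √(Q.side ^ n) * Q.haar (oneVec n) x = Q.toSet.indicator (fun _ => (1 : ℝ)) x := by
  have hv : 0 < √(Q.side ^ n) := Real.sqrt_pos.2 (pow_pos Q.side_pos n)
  rw [haar, ← mul_assoc, mul_inv_cancel₀ hv.ne', one_mul, indicator_toSet_eq_prod]
  simp [oneVec, haar1, indicator, mem_Ico]

lemma haar_mul_self (Q : Cube n) (β : Fin n → Bool) (x : Fin n → ℝ) :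
    Q.haar β x * Q.haar β x = (Q.side ^ n)⁻¹ * Q.toSet.indicator (fun _ => (1 : ℝ)) x := by
  rw [← abs_mul_abs_self, abs_haar]
  by_cases hx : x ∈ Q.toSet
  · simp [indicator_of_mem hx, ← mul_inv, Real.mul_self_sqrt (pow_pos Q.side_pos n).le]
  · simp [indicator_of_notMem hx]

lemma integral_haar {β : Fin n → Bool} (hβ : β ≠ oneVec n) (Q : Cube n) :
    ∫ x, Q.haar β x = 0 := by
  obtain ⟨i, hi⟩ : ∃ i, β i = false := by
    by_contra! h
    exact hβ (funext fun i => by simpa [oneVec] using h i)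
  simp only [haar]
  rw [integral_const_mul,
    integral_fintype_prod_volume_eq_prod (fun i t => haar1 (Q.corner i) Q.side (β i) t),
    Finset.prod_eq_zero (Finset.mem_univ i) (by rw [hi]; exact integral_haar1_false _ _), mul_zero]

lemma integral_mul_haar_mul_self (Q : Cube n) (β : Fin n → Bool) (b : Fn n) :
    ∫ x, b x * (Q.haar β x * Q.haar β x) = cubeAvg Q b := by
  have hv : 0 < Q.side ^ n := pow_pos Q.side_pos n
  have hpt : ∀ x, b x * (Q.haar β x * Q.haar β x) = (Q.side ^ n)⁻¹ * Q.toSet.indicator b x := by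
    intro x
    by_cases hx : x ∈ Q.toSet <;> simp [haar_mul_self, hx, mul_comm]
  simp only [hpt]
  rw [integral_const_mul, integral_indicator Q.measurableSet_toSet, cubeAvg, setAverage_eq,
    measureReal_def, volume_toSet, ENNReal.toReal_ofReal hv.le, smul_eq_mul]

lemma cubeAvg_one (Q : Cube n) : cubeAvg Q 1 = 1 := by
  have hv : 0 < Q.side ^ n := pow_pos Q.side_pos n
  simp [cubeAvg, setAverage_const, Q.volume_toSet, hv]

lemma prod_cubeAvg_mulSingle {ι : Type*} [Fintype ι] [DecidableEq ι] (Q : Cube n) (i : ι)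
    (b : Fn n) : ∏ j, cubeAvg Q ((Pi.mulSingle i b : ι → Fn n) j) = cubeAvg Q b := by
  rw [Fintype.prod_eq_single i fun j hj => by rw [Pi.mulSingle_eq_of_ne hj, cubeAvg_one],
    Pi.mulSingle_eq_same]

lemma integral_mul_sqrt_mul_haar_mul_haar (Q : Cube n) (β : Fin n → Bool) (w : Fn n) :
    ∫ x, w x * (√(Q.side ^ n) * Q.haar β x) * Q.haar β x = √(Q.side ^ n) * cubeAvg Q w := by
  simp_rw [mul_left_comm (w _), mul_assoc, integral_const_mul, integral_mul_haar_mul_self]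

lemma haar_eq_haar_corner_of_mem_half {Q R : Cube n} (hside : R.side = Q.side / 2)
    (halign : ∀ i, R.corner i = Q.corner i ∨ R.corner i = Q.corner i + Q.side / 2)
    (β : Fin n → Bool) {x : Fin n → ℝ} (hx : x ∈ R.toSet) :
    Q.haar β x = Q.haar β R.corner := by
  simp only [haar]
  congr 1
  refine Finset.prod_congr rfl fun i _ => ?_
  have hxi := hx i
  have hs := Q.side_pos
  rw [hside] at hxi
  rcases halign i with h | h
  · rw [haar1_of_mem_left hs _ ⟨hxi.1.trans' h.ge, by linarith⟩,
      haar1_of_mem_left hs _ ⟨h.ge, by linarith⟩]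
  · rw [haar1_of_mem_right _ ⟨hxi.1.trans' h.ge, by linarith⟩,
      haar1_of_mem_right _ ⟨h.ge, by linarith⟩]

lemma integral_haar_mul_eq_zero_of_const {β : Fin n → Bool} (hβ : β ≠ oneVec n) (Q : Cube n)
    {g : Fn n} {c : ℝ} (hg : ∀ x ∈ Q.toSet, g x = c) : ∫ x, Q.haar β x * g x = 0 := by
  have hpt : ∀ x, Q.haar β x * g x = c * Q.haar β x := fun x => by
    by_cases hx : x ∈ Q.toSet
    · rw [hg x hx, mul_comm]
    · simp [haar_eq_zero_of_notMem Q β hx]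
  simp only [hpt, integral_const_mul, integral_haar hβ, mul_zero]

end Cube

namespace DyadicGrid

variable {n : ℕ} (D : DyadicGrid n)

lemma subset_of_side_le (hn : 0 < n) {Q R : Cube n} (hQ : Q ∈ D.cubes) (hR : R ∈ D.cubes)
    (hside : Q.side ≤ R.side) {x : Fin n → ℝ} (hxQ : x ∈ Q.toSet) (hxR : x ∈ R.toSet) :
    Q.toSet ⊆ R.toSet := by
  rcases D.nested Q hQ R hR with h | h | h
  · exact h
  · exact (Cube.eq_of_subset_of_side_le hn h hside).symm ▸ le_rfl
  · exact absurd hxR (disjoint_left.mp h hxQ)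

lemma exists_half_of_ssubset (hn : 0 < n) {J Q : Cube n} (hJ : J ∈ D.cubes) (hQ : Q ∈ D.cubes)
    (hJQ : J.toSet ⊂ Q.toSet) :
    ∃ R ∈ D.cubes, J.toSet ⊆ R.toSet ∧ R.toSet ⊆ Q.toSet ∧ R.side = Q.side / 2 := by
  obtain ⟨k, hk⟩ := D.side_mem J hJ
  obtain ⟨l, hl⟩ := D.side_mem Q hQ
  have hlt : J.side < Q.side := (Cube.side_le_of_subset hn hJQ.1).lt_of_ne fun h =>
    hJQ.ne (congrArg Cube.toSet (Cube.eq_of_subset_of_side_le hn hJQ.1 h.ge))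
  have hkl : k < l := by
    rw [hk, hl] at hlt
    exact (zpow_lt_zpow_iff_right₀ one_lt_two).1 hlt
  have hhalf : (2 : ℝ) ^ (l - 1) = Q.side / 2 := by
    rw [hl, zpow_sub₀ two_ne_zero, zpow_one]
  have hJside : J.side ≤ Q.side / 2 := by
    rw [hk, ← hhalf]
    exact zpow_le_zpow_right₀ one_le_two (by omega)
  obtain ⟨R, hR, hRside, hJR⟩ := D.covers (l - 1) J.corner
  rw [hhalf] at hRside
  refine ⟨R, hR, D.subset_of_side_le hn hJ hR (hRside ▸ hJside) J.corner_mem hJR,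
    D.subset_of_side_le hn hR hQ (by linarith [Q.side_pos]) hJR (hJQ.1 J.corner_mem), hRside⟩

lemma corner_eq_or_eq_add_half (hn : 0 < n) {R Q : Cube n} (hR : R ∈ D.cubes)
    (hQ : Q ∈ D.cubes) (hRQ : R.toSet ⊆ Q.toSet) (hside : R.side = Q.side / 2) (i : Fin n) :
    R.corner i = Q.corner i ∨ R.corner i = Q.corner i + Q.side / 2 := by
  -- Otherwise `R` straddles the midline of `Q` in direction `i`, and the grid cube of the same
  -- size through the point `y` of `Q`'s lower face overlaps `R` without being `R`.
  by_contra! hne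
  have hlow : Q.corner i < R.corner i := (Cube.corner_le_of_subset hRQ i).lt_of_ne hne.1.symm
  have hhigh : R.corner i < Q.corner i + Q.side / 2 :=
    (by linarith [Cube.add_side_le_of_subset hRQ i] : R.corner i ≤ _).lt_of_ne hne.2
  set y := Function.update R.corner i (Q.corner i)
  have hyQ : y ∈ Q.toSet := by
    intro k
    rcases eq_or_ne k i with rfl | hk
    · simp only [y, Function.update_self]
      exact ⟨le_rfl, by linarith [Q.side_pos]⟩
    · simpa only [y, Function.update_of_ne hk] using hRQ R.corner_mem k
  obtain ⟨e, he⟩ := D.side_mem R hR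
  obtain ⟨S, hS, hSside, hyS⟩ := D.covers e y
  rw [← he] at hSside
  have hSQ := D.subset_of_side_le hn hS hQ (by linarith [Q.side_pos]) hyS hyQ
  have hSi : S.corner i = Q.corner i := by
    have := (hyS i).1
    simp only [y, Function.update_self] at this
    exact le_antisymm this (Cube.corner_le_of_subset hSQ i)
  have hRS : R.corner ∈ S.toSet := by
    intro k
    rcases eq_or_ne k i with rfl | hk
    · rw [hSi, hSside, hside]
      exact ⟨hlow.le, hhigh⟩
    · simpa only [y, Function.update_of_ne hk] using hyS k
  have hyR := D.subset_of_side_le hn hS hR hSside.le hRS R.corner_mem hyS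
  have := (hyR i).1
  simp only [y, Function.update_self] at this
  linarith

lemma haar_const_on_of_ssubset (hn : 0 < n) {J Q : Cube n} (hJ : J ∈ D.cubes)
    (hQ : Q ∈ D.cubes) (hJQ : J.toSet ⊂ Q.toSet) (β : Fin n → Bool) :
    ∃ c, ∀ x ∈ J.toSet, Q.haar β x = c := by
  obtain ⟨R, hR, hJR, hRQ, hside⟩ := D.exists_half_of_ssubset hn hJ hQ hJQ
  exact ⟨Q.haar β R.corner, fun x hx => Cube.haar_eq_haar_corner_of_mem_half hside
    (D.corner_eq_or_eq_add_half hn hR hQ hRQ hside) β (hJR hx)⟩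

lemma integral_haar_mul_haar_of_ne {J Q : Cube n} (hJ : J ∈ D.cubes) (hQ : Q ∈ D.cubes)
    (hne : J ≠ Q) {β : Fin n → Bool} (hβ : β ≠ oneVec n) :
    ∫ x, J.haar β x * Q.haar β x = 0 := by
  have hn : 0 < n := Nat.pos_of_ne_zero fun h => hβ (by subst h; exact Subsingleton.elim _ _)
  have hne' : J.toSet ≠ Q.toSet := (Cube.toSet_injective hn).ne hne
  rcases D.nested J hJ Q hQ with h | h | h
  · obtain ⟨c, hc⟩ := D.haar_const_on_of_ssubset hn hJ hQ (h.ssubset_of_ne hne') β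
    exact J.integral_haar_mul_eq_zero_of_const hβ hc
  · obtain ⟨c, hc⟩ := D.haar_const_on_of_ssubset hn hQ hJ (h.ssubset_of_ne hne'.symm) β
    simp_rw [mul_comm (J.haar β _)]
    exact Q.integral_haar_mul_eq_zero_of_const hβ hc
  · have hpt : ∀ x, J.haar β x * Q.haar β x = 0 := fun x => by
      by_cases hx : x ∈ J.toSet
      · rw [Q.haar_eq_zero_of_notMem β (disjoint_left.mp h hx), mul_zero]
      · rw [J.haar_eq_zero_of_notMem β hx, zero_mul]
    simp [hpt]

end DyadicGrid

lemma sqrt_pow_mul_rpow_eq_sqrt {v : ℝ} (hv : 0 < v) (m : ℕ) :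
    √v ^ m * v ^ (-((m : ℝ) - 1) / 2) = √v := by
  rw [Real.sqrt_eq_rpow, ← Real.rpow_natCast, ← Real.rpow_mul hv.le, ← Real.rpow_add hv]
  congr 1
  ring

section HaarMultiplier

variable {n m : ℕ} {D : DyadicGrid n} {J : Cube n} (ε : Cube n → ℝ)
  (α : Fin (m + 1) → Fin n → Bool)

lemma haarMult_eq_single (hJ : J ∈ D.cubes) {g : Fin m → Fn n} (j₀ : Fin m)
    (hg : ∀ Q ∈ D.cubes, Q ≠ J → ∫ y, g j₀ y * Q.haar (α j₀.castSucc) y = 0)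
    (x : Fin n → ℝ) :
    haarMult D ε α g x = ε J * (∏ j, ∫ y, g j y * J.haar (α j.castSucc) y) *
      J.haar (α (Fin.last m)) x * (J.side ^ n) ^ (-((m : ℝ) - 1) / 2) := by
  refine tsum_eq_single (⟨J, hJ⟩ : D.cubes) fun Q hQ => ?_
  rw [Finset.prod_eq_zero (Finset.mem_univ j₀) (hg Q Q.2 fun h => hQ (Subtype.ext h))]
  simp

lemma haarMult_mul_sqrt_mul_haar (hJ : J ∈ D.cubes) {j₀ : Fin m}
    (hcanc : α j₀.castSucc ≠ oneVec n) {w : Fin m → Fn n} (hw : w j₀ = 1) (x : Fin n → ℝ) :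
    haarMult D ε α (fun j y => w j y * (√(J.side ^ n) * J.haar (α j.castSucc) y)) x =
      ε J * (∏ j, cubeAvg J (w j)) * √(J.side ^ n) * J.haar (α (Fin.last m)) x := by
  rw [haarMult_eq_single ε α hJ j₀ (fun Q hQ hQJ => ?_)]
  · simp_rw [J.integral_mul_sqrt_mul_haar_mul_haar, Finset.prod_mul_distrib, Finset.prod_const,
      Finset.card_univ, Fintype.card_fin]
    linear_combination (ε J * (∏ j, cubeAvg J (w j)) * J.haar (α (Fin.last m)) x) *
      sqrt_pow_mul_rpow_eq_sqrt (pow_pos J.side_pos n) m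
  · simp_rw [hw, Pi.one_apply, one_mul, mul_assoc, integral_const_mul,
      D.integral_haar_mul_haar_of_ne hJ hQ hQJ.symm hcanc, mul_zero]

end HaarMultiplier

theorem haar_commutator_test_functions_general {n m : ℕ} (hm : 0 < m)
    (D : DyadicGrid n) (J : Cube n) (hJ : J ∈ D.cubes)
    (ε : Cube n → ℝ)
    (α : Fin (m + 1) → Fin n → Bool)
    (hα' : ∃ j : Fin m, j ≠ ⟨0, hm⟩ ∧ α j.castSucc ≠ oneVec n)
    (b : Fn n)
    (f : Fin m → Fn n)
    (hf : ∀ j : Fin m, f j =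
      if α j.castSucc = oneVec n then J.toSet.indicator fun _ => (1 : ℝ)
      else fun x => Real.sqrt (J.side ^ n) * J.haar (α j.castSucc) x) :
    (∀ x, mcommutator b ⟨0, hm⟩ (haarMult D ε α) f x =
        ε J * (b x - cubeAvg J b) * Real.sqrt (J.side ^ n) * J.haar (α (Fin.last m)) x) ∧
      ∀ x, |mcommutator b ⟨0, hm⟩ (haarMult D ε α) f x| =
        |ε J| * |b x - cubeAvg J b| * J.toSet.indicator (fun _ => (1 : ℝ)) x := by
  obtain ⟨j₀, hj₀, hcanc⟩ := hα'
  have hf₁ : f = fun j y => (1 : Fin m → Fn n) j y * (√(J.side ^ n) * J.haar (α j.castSucc) y) := by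
    funext j y
    rw [hf j, Pi.one_apply, Pi.one_apply, one_mul]
    split_ifs with h
    · rw [h, J.sqrt_mul_haar_oneVec]
    · rfl
  have hf_b : Function.update f ⟨0, hm⟩ (fun y => b y * f ⟨0, hm⟩ y) =
      fun j y => (Pi.mulSingle ⟨0, hm⟩ b : Fin m → Fn n) j y *
        (√(J.side ^ n) * J.haar (α j.castSucc) y) := by
    funext j y
    rcases eq_or_ne j ⟨0, hm⟩ with rfl | hj
    · simp [hf₁]
    · simp [hf₁, hj]
  have hcomm : ∀ x, mcommutator b ⟨0, hm⟩ (haarMult D ε α) f x =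
      ε J * (b x - cubeAvg J b) * √(J.side ^ n) * J.haar (α (Fin.last m)) x := fun x => by
    rw [mcommutator, hf_b, hf₁, haarMult_mul_sqrt_mul_haar ε α hJ hcanc rfl,
      haarMult_mul_sqrt_mul_haar ε α hJ hcanc (Pi.mulSingle_eq_of_ne hj₀ b),
      J.prod_cubeAvg_mulSingle]
    simp only [Pi.one_apply, Cube.cubeAvg_one, Finset.prod_const_one]
    ring
  refine ⟨hcomm, fun x => ?_⟩
  have hv : 0 < √(J.side ^ n) := Real.sqrt_pos.2 (pow_pos J.side_pos n)
  rw [hcomm, abs_mul, abs_mul, abs_mul, J.abs_haar, abs_of_pos hv]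
  field_simp

/-- **Lemma (exact computation of a Haar multiplier commutator on Haar test
functions).** Testing `[b, P^{α⃗}_ε]_1` on `f_j = |J|^{1/2} h_J^{α_j}` (resp. `χ_J` in
the noncancellative slots) collapses the Haar sum to the single cube `J`, producing
`ε_J (b - ⟨b⟩_J) |J|^{1/2} h_J^{α_{m+1}}`, whose modulus is
`|ε_J| |b - ⟨b⟩_J| χ_J`. -/
theorem haar_commutator_test_functions {n m : ℕ} (hm : 0 < m)
    (D : DyadicGrid n) (J : Cube n) (hJ : J ∈ D.cubes)
    (ε : Cube n → ℝ) (hε : ∃ B, ∀ Q ∈ D.cubes, |ε Q| ≤ B)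
    (α : Fin (m + 1) → Fin n → Bool) (hα : IsHaarAdmissible α)
    (hα' : ∃ j : Fin m, j ≠ ⟨0, hm⟩ ∧ α j.castSucc ≠ oneVec n)
    (b : Fn n) (hb : MeasureTheory.LocallyIntegrable b MeasureTheory.volume)
    (f : Fin m → Fn n)
    (hf : ∀ j : Fin m, f j =
      if α j.castSucc = oneVec n then J.toSet.indicator fun _ => (1 : ℝ)
      else fun x => Real.sqrt (J.side ^ n) * J.haar (α j.castSucc) x) :
    (∀ x, mcommutator b ⟨0, hm⟩ (haarMult D ε α) f x =
        ε J * (b x - cubeAvg J b) * Real.sqrt (J.side ^ n) * J.haar (α (Fin.last m)) x) ∧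
      ∀ x, |mcommutator b ⟨0, hm⟩ (haarMult D ε α) f x| =
        |ε J| * |b x - cubeAvg J b| * J.toSet.indicator (fun _ => (1 : ℝ)) x :=
  haar_commutator_test_functions_general hm D J hJ ε α hα' b f hf
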